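/- arXiv:1405.6043 — 2 statements merged into one kernel-verified Lean document; each statement's English description precedes it below -/
import Mathlib

section
/- Let I be a finite set of weighted constraints on domain D, J₁, J₂, J₃, J₄ ⊆ I and a ∈ D^W with W ⊆ var(I). Assume w(J₃,a) ≠ 0, w(J₄,a) ≠ 0, and (i) J₁ ∩ J₂ ⊆ J₃ and J₃ ∩ J₄ ⊆ J₁, (ii) var(J₁ \ J₃) ∩ var(J₁ ∩ J₃) ⊆ W, (iii) var(J₃ \ J₁) ∩ var(J₁ ∩ J₃) ⊆ W, (iv) var(J₁ \ J₃) ∩ var(J₂) ⊆ W, (v) var(J₃ \ J₁) ∩ var(J₄) ⊆ W. Then w((J₃ \ J₁) ∪ J₄, a) ≠ 0 and (w(J₁,a)·w(J₂,a))/(w(J₃,a)·w(J₄,a)) = w((J₁ \ J₃) ∪ J₂, a)/w((J₃ \ J₁) ∪ J₄, a). -/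
open Finset
open scoped Classical

/-- A weighted constraint with default value, viewed through the total
non-negative rational valued function it induces: `val` depends only on
the variables `vars`. -/
structure Cst (V D : Type*) where
  vars : Finset V
  val : (V → D) → NNRat
  dep : ∀ a b : V → D, (∀ x ∈ vars, a x = b x) → val a = val b

variable {V D : Type*} [Fintype V] [DecidableEq V] [Fintype D] [DecidableEq D]

/-- var(J), the set of variables of a set of constraints. -/
def varsSet (J : Finset (Cst V D)) : Finset V := J.sup Cst.vars

/-- Extend the partial assignment `a` by the values of `b` on `S`. -/
noncomputable def patch (a : V → D) (S : Finset V) (b : {x // x ∈ S} → D) : V → D :=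
  fun v => if h : v ∈ S then b ⟨v, h⟩ else a v

/-- w(J,a) for a partial assignment `a` on `W`: the sum over all extensions `b`
of `a` to the variables of `J` of the product of the constraint values. -/
noncomputable def w (J : Finset (Cst V D)) (W : Finset V) (a : V → D) : NNRat :=
  ∑ b : ({x // x ∈ varsSet J \ W} → D),
    ∏ c ∈ J, c.val (patch a (varsSet J \ W) b)

/-- Auxiliary equivalence: functions on a disjoint union of finsets. -/
noncomputable def splitEquiv (S T : Finset V) (hd : Disjoint S T) :
    ({x // x ∈ S ∪ T} → D) ≃ ({x // x ∈ S} → D) × ({x // x ∈ T} → D) where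
  toFun b := (fun x => b ⟨x.1, mem_union_left _ x.2⟩,
              fun x => b ⟨x.1, mem_union_right _ x.2⟩)
  invFun p := fun x => if h : x.1 ∈ S then p.1 ⟨x.1, h⟩ else
    p.2 ⟨x.1, (mem_union.mp x.2).resolve_left h⟩
  left_inv b := by
    funext x
    by_cases h : x.1 ∈ S <;> simp [h]
  right_inv p := by
    refine Prod.ext ?_ ?_
    · funext x; simp [x.2]
    · funext x
      have hx : x.1 ∉ S := fun hs => (Finset.disjoint_left.mp hd hs x.2)
      simp [hx]

lemma w_union_mul (A B : Finset (Cst V D)) (W : Finset V) (a : V → D)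
    (hd : Disjoint A B) (hv : varsSet A ∩ varsSet B ⊆ W) :
    w (A ∪ B) W a = w A W a * w B W a := by
  classical
  set S := varsSet A \ W with hS
  set T := varsSet B \ W with hT
  have hST : Disjoint S T := by
    rw [Finset.disjoint_left]
    intro x hxS hxT
    exact (Finset.mem_sdiff.mp hxS).2 (hv (Finset.mem_inter.mpr
      ⟨(Finset.mem_sdiff.mp hxS).1, (Finset.mem_sdiff.mp hxT).1⟩))
  have hU : varsSet (A ∪ B) \ W = S ∪ T := by
    rw [hS, hT, ← Finset.union_sdiff_distrib]
    congr 1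
    simp [varsSet, Finset.sup_union]
  -- the two restriction maps
  have key : ∀ b : ({x // x ∈ S ∪ T} → D),
      (∀ c ∈ A, c.val (patch a (S ∪ T) b)
        = c.val (patch a S (fun x => b ⟨x.1, mem_union_left _ x.2⟩))) ∧
      (∀ c ∈ B, c.val (patch a (S ∪ T) b)
        = c.val (patch a T (fun x => b ⟨x.1, mem_union_right _ x.2⟩))) := by
    intro b
    constructor
    · intro c hc
      apply c.dep
      intro v hv'
      have hvA : v ∈ varsSet A := Finset.mem_sup.mpr ⟨c, hc, hv'⟩
      by_cases h : v ∈ S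
      · simp [patch, h, Finset.mem_union.mpr (Or.inl h)]
      · have hvT : v ∉ T := by
          intro ht
          have : v ∈ W := hv (Finset.mem_inter.mpr ⟨hvA, (Finset.mem_sdiff.mp ht).1⟩)
          exact (Finset.mem_sdiff.mp ht).2 this
        have : v ∉ S ∪ T := by simp [Finset.mem_union, h, hvT]
        simp [patch, h, this]
    · intro c hc
      apply c.dep
      intro v hv'
      have hvB : v ∈ varsSet B := Finset.mem_sup.mpr ⟨c, hc, hv'⟩
      by_cases h : v ∈ T
      · simp [patch, h, Finset.mem_union.mpr (Or.inr h)]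
      · have hvS : v ∉ S := by
          intro hs
          have : v ∈ W := hv (Finset.mem_inter.mpr ⟨(Finset.mem_sdiff.mp hs).1, hvB⟩)
          exact (Finset.mem_sdiff.mp hs).2 this
        have : v ∉ S ∪ T := by simp [Finset.mem_union, h, hvS]
        simp [patch, h, this]
  unfold w
  rw [hU]
  calc ∑ b : ({x // x ∈ S ∪ T} → D), ∏ c ∈ A ∪ B, c.val (patch a (S ∪ T) b)
      = ∑ b : ({x // x ∈ S ∪ T} → D),
          (∏ c ∈ A, c.val (patch a S (fun x => b ⟨x.1, mem_union_left _ x.2⟩))) *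
          (∏ c ∈ B, c.val (patch a T (fun x => b ⟨x.1, mem_union_right _ x.2⟩))) := by
        apply Finset.sum_congr rfl
        intro b _
        rw [Finset.prod_union hd]
        congr 1
        · exact Finset.prod_congr rfl (fun c hc => (key b).1 c hc)
        · exact Finset.prod_congr rfl (fun c hc => (key b).2 c hc)
    _ = ∑ p : ({x // x ∈ S} → D) × ({x // x ∈ T} → D),
          (∏ c ∈ A, c.val (patch a S p.1)) * (∏ c ∈ B, c.val (patch a T p.2)) := by
        exact Fintype.sum_equiv (splitEquiv S T hST) _ _ (fun b => rfl)
    _ = (∑ b : ({x // x ∈ S} → D), ∏ c ∈ A, c.val (patch a S b)) *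
        (∑ b : ({x // x ∈ T} → D), ∏ c ∈ B, c.val (patch a T b)) := by
        rw [Fintype.sum_prod_type, Finset.sum_mul_sum]

/-- the four-instance cancellation corollary. -/
theorem stmt3 (I J₁ J₂ J₃ J₄ : Finset (Cst V D)) (W : Finset V) (a : V → D)
    (h1 : J₁ ⊆ I) (h2 : J₂ ⊆ I) (h3 : J₃ ⊆ I) (h4 : J₄ ⊆ I)
    (hW : W ⊆ varsSet I)
    (hne3 : w J₃ W a ≠ 0) (hne4 : w J₄ W a ≠ 0)
    (hi : J₁ ∩ J₂ ⊆ J₃ ∧ J₃ ∩ J₄ ⊆ J₁)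
    (hii : varsSet (J₁ \ J₃) ∩ varsSet (J₁ ∩ J₃) ⊆ W)
    (hiii : varsSet (J₃ \ J₁) ∩ varsSet (J₁ ∩ J₃) ⊆ W)
    (hiv : varsSet (J₁ \ J₃) ∩ varsSet J₂ ⊆ W)
    (hv : varsSet (J₃ \ J₁) ∩ varsSet J₄ ⊆ W) :
    w ((J₃ \ J₁) ∪ J₄) W a ≠ 0 ∧
      (w J₁ W a * w J₂ W a) / (w J₃ W a * w J₄ W a) =
        w ((J₁ \ J₃) ∪ J₂) W a / w ((J₃ \ J₁) ∪ J₄) W a := by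
  classical
  obtain ⟨hi1, hi2⟩ := hi
  -- disjointness facts
  have hd1 : Disjoint (J₁ \ J₃) (J₁ ∩ J₃) := Finset.disjoint_sdiff_inter J₁ J₃
  have hd3 : Disjoint (J₃ \ J₁) (J₁ ∩ J₃) := by
    rw [Finset.inter_comm]; exact Finset.disjoint_sdiff_inter J₃ J₁
  have hd12 : Disjoint (J₁ \ J₃) J₂ := by
    rw [Finset.disjoint_left]
    intro c hc hc2
    exact (Finset.mem_sdiff.mp hc).2 (hi1 (Finset.mem_inter.mpr ⟨(Finset.mem_sdiff.mp hc).1, hc2⟩))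
  have hd34 : Disjoint (J₃ \ J₁) J₄ := by
    rw [Finset.disjoint_left]
    intro c hc hc4
    exact (Finset.mem_sdiff.mp hc).2 (hi2 (Finset.mem_inter.mpr ⟨(Finset.mem_sdiff.mp hc).1, hc4⟩))
  -- decompositions
  have e1 : w J₁ W a = w (J₁ \ J₃) W a * w (J₁ ∩ J₃) W a := by
    rw [← w_union_mul _ _ _ _ hd1 hii, Finset.sdiff_union_inter]
  have e3 : w J₃ W a = w (J₃ \ J₁) W a * w (J₁ ∩ J₃) W a := by
    rw [← w_union_mul _ _ _ _ hd3 hiii]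
    congr 1
    rw [Finset.inter_comm, Finset.sdiff_union_inter]
  have e2 : w ((J₁ \ J₃) ∪ J₂) W a = w (J₁ \ J₃) W a * w J₂ W a :=
    w_union_mul _ _ _ _ hd12 hiv
  have e4 : w ((J₃ \ J₁) ∪ J₄) W a = w (J₃ \ J₁) W a * w J₄ W a :=
    w_union_mul _ _ _ _ hd34 hv
  have hz1 : w (J₃ \ J₁) W a ≠ 0 := fun h => hne3 (by rw [e3, h, zero_mul])
  have hy : w (J₁ ∩ J₃) W a ≠ 0 := fun h => hne3 (by rw [e3, h, mul_zero])
  refine ⟨by rw [e4]; exact mul_ne_zero hz1 hne4, ?_⟩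
  rw [e1, e2, e3, e4]
  rw [div_eq_div_iff (mul_ne_zero (mul_ne_zero hz1 hy) hne4) (mul_ne_zero hz1 hne4)]
  ring
end

section
/- With the setup of the orders ≺ and ≺ₖ on a finite constraint set I with pairwise distinct variable sets, whose variables x₁,…,xₙ form a β-elimination order of the hypergraph of I: for every k, the relation ≺ₖ is a strict partial order (irreflexive and transitive), and ≺ₖ ⊆ ≺_{k+1}. -/
open Finset
open scoped Classical

variable {n : ℕ} {γ : Type*}

/-- `Xset n k` is the set `Xₖ = {x₁,…,xₖ}` of the first `k` variables, where the
variables are `Fin n` in their natural enumeration (`x_{k+1}` is the index `k`). -/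
def Xset (n k : ℕ) : Finset (Fin n) := Finset.univ.filter (fun v => (v : ℕ) < k)

/-- The order `≺`: `c ≺ d` iff for some `k`, `var(c) \ Xₖ ⊊ var(d) \ Xₖ`. -/
def prec (vr : γ → Finset (Fin n)) (c d : γ) : Prop :=
  ∃ k : ℕ, vr c \ Xset n k ⊂ vr d \ Xset n k

/-- The relations `≺ₖ`, defined inductively on `k`:
`≺₀ = ∅` and `c ≺_{k+1} d` iff `c ≺ₖ d` or there is `e ∈ I` with `c ⪯ₖ e ≺ d`
and `x_{k+1} ∈ var(d) ∩ var(e)`. -/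
def preck (I : Finset γ) (vr : γ → Finset (Fin n)) : ℕ → γ → γ → Prop
  | 0 => fun _ _ => False
  | (k+1) => fun c d => preck I vr k c d ∨
      ∃ e ∈ I, (c = e ∨ preck I vr k c e) ∧ prec vr e d ∧
        ∃ h : k < n, (⟨k, h⟩ : Fin n) ∈ vr d ∧ (⟨k, h⟩ : Fin n) ∈ vr e

/-- `x_{k+1}` is a nest point of the hypergraph of `I` after removing `x₁,…,xₖ`:
the edges (variable sets) containing it, with `Xₖ` removed, form a chain. -/
def NestAt (I : Finset γ) (vr : γ → Finset (Fin n)) (k : ℕ) : Prop :=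
  ∀ h : k < n, ∀ c ∈ I, ∀ d ∈ I,
    (⟨k, h⟩ : Fin n) ∈ vr c → (⟨k, h⟩ : Fin n) ∈ vr d →
      vr c \ Xset n k ⊆ vr d \ Xset n k ∨ vr d \ Xset n k ⊆ vr c \ Xset n k

/-- `x₁,…,xₙ` is a β-elimination order of the hypergraph of `I`. -/
def ElimOrder (I : Finset γ) (vr : γ → Finset (Fin n)) : Prop :=
  ∀ k : ℕ, NestAt I vr k

lemma mem_Xset {n k : ℕ} {v : Fin n} : v ∈ Xset n k ↔ (v : ℕ) < k := by
  simp [Xset]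

lemma sdiff_Xset_mono {j k : ℕ} (h : j ≤ k) {s t : Finset (Fin n)}
    (hst : s \ Xset n j ⊆ t \ Xset n j) : s \ Xset n k ⊆ t \ Xset n k := by
  intro x hx
  rw [mem_sdiff] at hx ⊢
  have hx' : x ∈ s \ Xset n j := by
    rw [mem_sdiff]
    exact ⟨hx.1, fun hj => hx.2 (mem_Xset.2 (lt_of_lt_of_le (mem_Xset.1 hj) h))⟩
  have ht := hst hx'
  rw [mem_sdiff] at ht
  exact ⟨ht.1, hx.2⟩

lemma prec_trans {vr : γ → Finset (Fin n)} {c d e : γ}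
    (h1 : prec vr c d) (h2 : prec vr d e) : prec vr c e := by
  obtain ⟨j, hj⟩ := h1
  obtain ⟨m, hm⟩ := h2
  rcases le_total j m with h | h
  · exact ⟨m, lt_of_le_of_lt (sdiff_Xset_mono h hj.subset) hm⟩
  · exact ⟨j, lt_of_lt_of_le hj (sdiff_Xset_mono h hm.subset)⟩

lemma prec_irrefl {vr : γ → Finset (Fin n)} {c : γ} : ¬ prec vr c c := by
  rintro ⟨k, hk⟩
  exact ssubset_irrefl _ hk

/-- Key consequence of the nest-point property: if `c` and `d` both contain
`x_{k+1}` and `c ≺ d`, then `var(c) \ Xₖ ⊆ var(d) \ Xₖ`. -/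
lemma key_sub {I : Finset γ} {vr : γ → Finset (Fin n)} {k : ℕ} (hk : k < n)
    (nest : NestAt I vr k) {c d : γ} (hc : c ∈ I) (hd : d ∈ I)
    (hck : (⟨k, hk⟩ : Fin n) ∈ vr c) (hdk : (⟨k, hk⟩ : Fin n) ∈ vr d)
    (hp : prec vr c d) : vr c \ Xset n k ⊆ vr d \ Xset n k := by
  obtain ⟨m, hm⟩ := hp
  rcases le_total m k with h | h
  · exact sdiff_Xset_mono h hm.subset
  · rcases nest hk c hc d hd hck hdk with h1 | h1
    · exact h1
    · exact absurd (sdiff_Xset_mono h h1) hm.2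

/-- By induction: `c ≺ₖ d` implies `c ≺ d` and `var(c) \ Xₖ ⊆ var(d) \ Xₖ`. -/
lemma preck_prec {I : Finset γ} {vr : γ → Finset (Fin n)}
    (helim : ElimOrder I vr) :
    ∀ k : ℕ, ∀ d ∈ I, ∀ e ∈ I, preck I vr k d e →
      prec vr d e ∧ vr d \ Xset n k ⊆ vr e \ Xset n k := by
  intro k
  induction k with
  | zero => intro d _ e _ h; exact h.elim
  | succ k ih =>
    intro d hd e he h
    rcases h with h | ⟨g, hg, hdg, hge, hk, hke, hkg⟩
    · obtain ⟨h1, h2⟩ := ih d hd e he h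
      exact ⟨h1, sdiff_Xset_mono (Nat.le_succ k) h2⟩
    · have hsub : vr g \ Xset n k ⊆ vr e \ Xset n k :=
        key_sub hk (helim k) hg he hkg hke hge
      rcases hdg with rfl | hdg
      · exact ⟨hge, sdiff_Xset_mono (Nat.le_succ k) hsub⟩
      · obtain ⟨h1, h2⟩ := ih d hd g hg hdg
        exact ⟨prec_trans h1 hge, sdiff_Xset_mono (Nat.le_succ k) (h2.trans hsub)⟩

lemma preck_transitive {I : Finset γ} {vr : γ → Finset (Fin n)}
    (helim : ElimOrder I vr) :
    ∀ k : ℕ, ∀ c ∈ I, ∀ d ∈ I, ∀ e ∈ I,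
      preck I vr k c d → preck I vr k d e → preck I vr k c e := by
  intro k
  induction k with
  | zero => intro c _ d _ e _ h _; exact h.elim
  | succ k ih =>
    intro c hc d hd e he h1 h2
    rcases h1 with h1 | ⟨f, hf, hcf, hfd, hK, hKd, hKf⟩
    · rcases h2 with h2 | ⟨g, hg, hdg, hge, hK, hKe, hKg⟩
      · exact Or.inl (ih c hc d hd e he h1 h2)
      · refine Or.inr ⟨g, hg, Or.inr ?_, hge, hK, hKe, hKg⟩
        rcases hdg with rfl | hdg
        · exact h1
        · exact ih c hc d hd g hg h1 hdg
    · -- `c ⪯ₖ f ≺ d` with `x_{k+1} ∈ var(d) ∩ var(f)`, and `d ≺_{k+1} e`.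
      have hde : prec vr d e := (preck_prec helim (k+1) d hd e he h2).1
      have hKe : (⟨k, hK⟩ : Fin n) ∈ vr e := by
        rcases h2 with h2 | ⟨g, hg, hdg, hge, hK', hKe', hKg'⟩
        · have hsub := (preck_prec helim k d hd e he h2).2
          have hmem : (⟨k, hK⟩ : Fin n) ∈ vr d \ Xset n k := by
            rw [mem_sdiff, mem_Xset]
            exact ⟨hKd, lt_irrefl k⟩
          exact (mem_sdiff.1 (hsub hmem)).1
        · exact hKe'
      exact Or.inr ⟨f, hf, hcf, prec_trans hfd hde, hK, hKe, hKf⟩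

/-- each `≺ₖ` is a strict partial order (irreflexive and
transitive) on `I`, and `≺ₖ ⊆ ≺_{k+1}`. -/
theorem stmt6 (I : Finset γ) (vr : γ → Finset (Fin n))
    (hdist : ∀ c ∈ I, ∀ d ∈ I, vr c = vr d → c = d)
    (hcover : I.sup vr = Finset.univ)
    (helim : ElimOrder I vr) :
    ∀ k : ℕ,
      (∀ c ∈ I, ¬ preck I vr k c c) ∧
      (∀ c ∈ I, ∀ d ∈ I, ∀ e ∈ I,
        preck I vr k c d → preck I vr k d e → preck I vr k c e) ∧
      (∀ c ∈ I, ∀ d ∈ I, preck I vr k c d → preck I vr (k+1) c d) := by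
  intro k
  refine ⟨?_, preck_transitive helim k, ?_⟩
  · intro c hc h
    exact prec_irrefl (preck_prec helim k c hc c hc h).1
  · intro c _ d _ h
    exact Or.inl h
end
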